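/- For any infinite family 𝒯 of complete L-theories, e-Sp(𝒯) is finite if and only if RS(𝒯) = 1; moreover, if RS(𝒯) = 1 then e-Sp(𝒯) = ds(𝒯). -/

import Mathlib

open FirstOrder Language Cardinal Set

universe u v w

variable {L : FirstOrder.Language.{u, v}}

/-- A complete theory: a satisfiable set of sentences containing each sentence or its
negation (`Theory.IsMaximal` in Mathlib). -/
abbrev CTheory (L : FirstOrder.Language.{u, v}) : Type max u v :=
  {T : L.Theory // T.IsMaximal}

/-- The neighbourhood `𝒯_φ = {T ∈ 𝒯 | φ ∈ T}`. -/
def nbhd (𝒯 : Set (CTheory L)) (φ : L.Sentence) : Set (CTheory L) :=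
  {T | T ∈ 𝒯 ∧ φ ∈ T.1}

/-- `T` is an accumulation point of `𝒯` if for every sentence `φ ∈ T` the set `𝒯_φ` is
infinite. -/
def IsAccPoint (𝒯 : Set (CTheory L)) (T : CTheory L) : Prop :=
  ∀ φ : L.Sentence, φ ∈ T.1 → (nbhd 𝒯 φ).Infinite

/-- The `E`-closure of `𝒯`: `𝒯` together with all its accumulation points. -/
def ClE (𝒯 : Set (CTheory L)) : Set (CTheory L) :=
  𝒯 ∪ {T | IsAccPoint 𝒯 T}

/-- The `e`-spectrum of `𝒯`: the cardinality of the set of accumulation points of `𝒯`. -/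
noncomputable def eSp (𝒯 : Set (CTheory L)) : Cardinal :=
  Cardinal.mk {T : CTheory L // IsAccPoint 𝒯 T}

/-- Two sentences are inconsistent if `{φ, ψ}` is unsatisfiable. -/
def Inconsistent (φ ψ : L.Sentence) : Prop :=
  ¬ FirstOrder.Language.Theory.IsSatisfiable ({φ, ψ} : L.Theory)

open Classical in
/-- `RSge α 𝒯` says `RS(𝒯) ≥ α`: `RS(𝒯) ≥ 0` iff `𝒯 ≠ ∅`; `RS(𝒯) ≥ 1` iff `𝒯` is infinite;
for `β ≥ 1`, `RS(𝒯) ≥ β + 1` iff there are pairwise inconsistent sentences `φ_n`, `n ∈ ℕ`,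
with `RS(𝒯_{φ_n}) ≥ β` for all `n`; for limit `λ`, `RS(𝒯) ≥ λ` iff `RS(𝒯) ≥ β` for all
`β < λ`. -/
noncomputable def RSge (α : Ordinal.{w}) : Set (CTheory L) → Prop :=
  @Ordinal.limitRecOn (fun _ => Set (CTheory L) → Prop) α
    (fun 𝒯 => 𝒯.Nonempty)
    (fun β ih 𝒯 =>
      if β = 0 then 𝒯.Infinite
      else ∃ φ : ℕ → L.Sentence,
        (∀ m n : ℕ, m ≠ n → Inconsistent (φ m) (φ n)) ∧ ∀ k : ℕ, ih (nbhd 𝒯 (φ k)))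
    (fun β _ ih 𝒯 => ∀ γ : Ordinal, ∀ h : γ < β, ih γ h 𝒯)

/-- `RS(𝒯) = α` for an ordinal `α`: `RS(𝒯) ≥ α` but not `RS(𝒯) ≥ α + 1`. -/
def RSeq (𝒯 : Set (CTheory L)) (α : Ordinal.{w}) : Prop :=
  RSge α 𝒯 ∧ ¬ RSge (α + 1) 𝒯

/-- `RS(𝒯) = ∞`: `RS(𝒯) ≥ α` for every ordinal `α`. -/
def RSinf (𝒯 : Set (CTheory L)) : Prop :=
  ∀ α : Ordinal.{w}, RSge α 𝒯

/-- `ds(𝒯) = n` (relative to `RS(𝒯) = α`): `n` is the largest natural number for which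
there exist `n` pairwise inconsistent sentences `φ_1, …, φ_n` with `RS(𝒯_{φ_i}) = α`. -/
def dsEq (𝒯 : Set (CTheory L)) (α : Ordinal.{w}) (n : ℕ) : Prop :=
  IsGreatest {m : ℕ | ∃ φ : Fin m → L.Sentence,
    (∀ i j : Fin m, i ≠ j → Inconsistent (φ i) (φ j)) ∧
    ∀ i : Fin m, RSeq (nbhd 𝒯 (φ i)) α} n

/-- `𝒯` is `e`-minimal: for every sentence `φ`, `𝒯_φ` is finite or `𝒯_{¬φ}` is finite. -/
def EMinimal (𝒯 : Set (CTheory L)) : Prop :=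
  ∀ φ : L.Sentence, (nbhd 𝒯 φ).Finite ∨ (nbhd 𝒯 φ.not).Finite

/-- `𝒯` is `a`-minimal: `𝒯` has infinitely many accumulation points and for every sentence
`φ`, `𝒯_φ` or `𝒯_{¬φ}` has only finitely many accumulation points. -/
def AMinimal (𝒯 : Set (CTheory L)) : Prop :=
  {T : CTheory L | IsAccPoint 𝒯 T}.Infinite ∧
  ∀ φ : L.Sentence,
    {T : CTheory L | IsAccPoint (nbhd 𝒯 φ) T}.Finite ∨
    {T : CTheory L | IsAccPoint (nbhd 𝒯 φ.not) T}.Finite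

/-- `𝒯` is `α`-minimal: `RS(𝒯) = α` and for every sentence `φ`, `RS(𝒯_φ) < α` or
`RS(𝒯_{¬φ}) < α`. -/
def AlphaMinimal (𝒯 : Set (CTheory L)) (α : Ordinal.{w}) : Prop :=
  RSeq 𝒯 α ∧
  ∀ φ : L.Sentence, ¬ RSge α (nbhd 𝒯 φ) ∨ ¬ RSge α (nbhd 𝒯 φ.not)

/-! Complete theories form a compact Stone space whose basic clopen sets are the `{T | φ ∈ T}`,
and an accumulation point of `𝒯` is the limit of a non-principal ultrafilter on `𝒯`. Hence
`𝒯_φ` is infinite iff some accumulation point contains `φ`, so pairwise inconsistent `φ_n` with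
infinite `𝒯_{φ_n}` yield distinct accumulation points; conversely, infinitely many accumulation
points can be separated by infinitely many pairwise inconsistent sentences. Thus `RS(𝒯) ≥ 2` iff
`e-Sp(𝒯)` is infinite. When `e-Sp(𝒯)` is finite, its accumulation points are separated by
pairwise inconsistent sentences `φ_i` with `RS(𝒯_{φ_i}) = 1`, and every family witnessing
`ds(𝒯)` yields that many distinct accumulation points, so `ds(𝒯) = e-Sp(𝒯)`. -/

open Function

namespace CTheory

variable (T S : CTheory L) {φ ψ : L.Sentence}

noncomputable def model : T.1.ModelType := T.2.1.some

theorem mem_iff_realize : φ ∈ T.1 ↔ T.model ⊨ φ :=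
  ⟨T.1.realize_sentence_of_mem, fun h =>
    (T.2.2 φ).resolve_right fun hn => T.1.realize_sentence_of_mem (M := T.model) hn h⟩

theorem not_mem_iff : φ.not ∈ T.1 ↔ φ ∉ T.1 := by
  simp only [mem_iff_realize, Sentence.realize_not]

theorem inf_mem_iff : φ ⊓ ψ ∈ T.1 ↔ φ ∈ T.1 ∧ ψ ∈ T.1 := by
  simp only [mem_iff_realize, Sentence.realize_inf]

theorem top_mem : (⊤ : L.Sentence) ∈ T.1 :=
  (T.mem_iff_realize).2 (Sentence.realize_top _)

theorem iInf_mem_iff {ι : Type*} [Finite ι] (f : ι → L.Sentence) :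
    Formula.iInf f ∈ T.1 ↔ ∀ i, f i ∈ T.1 := by
  simp only [mem_iff_realize]
  exact Formula.realize_iInf

variable {T S}

theorem exists_mem_not_mem_of_ne (h : T ≠ S) : ∃ σ : L.Sentence, σ ∈ T.1 ∧ σ.not ∈ S.1 := by
  by_contra! hsep
  have hsub : T.1 ⊆ S.1 := fun σ hσ => by simpa [S.not_mem_iff] using hsep σ hσ
  refine h (Subtype.ext (hsub.antisymm fun σ hσS => ?_))
  by_contra hσT
  exact (S.not_mem_iff).1 (hsub ((T.not_mem_iff).2 hσT)) hσS

theorem not_inconsistent_of_mem (hφ : φ ∈ T.1) (hψ : ψ ∈ T.1) : ¬ Inconsistent φ ψ :=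
  fun h => h (T.2.1.mono (Set.insert_subset hφ (Set.singleton_subset_iff.2 hψ)))

end CTheory

section Inconsistent

variable {φ ψ : L.Sentence}

theorem inconsistent_of_forall_realize
    (h : ∀ (M : Type (max u v)) [L.Structure M], M ⊨ φ → ¬ M ⊨ ψ) : Inconsistent φ ψ :=
  fun ⟨M⟩ => h M (Theory.realize_sentence_of_mem {φ, ψ} (Set.mem_insert _ _))
    (Theory.realize_sentence_of_mem {φ, ψ} (Set.mem_insert_of_mem _ rfl))

instance : Std.Symm (Inconsistent (L := L)) :=
  ⟨fun φ ψ h => by rwa [Inconsistent, Set.pair_comm]⟩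

end Inconsistent

section AccPoints

variable {𝒮 𝒯 : Set (CTheory L)} {φ : L.Sentence}

theorem nbhd_subset : nbhd 𝒯 φ ⊆ 𝒯 := fun _ hT => hT.1

theorem nbhd_mono (h : 𝒮 ⊆ 𝒯) (φ : L.Sentence) : nbhd 𝒮 φ ⊆ nbhd 𝒯 φ :=
  fun _ hS => ⟨h hS.1, hS.2⟩

theorem nbhd_top : nbhd 𝒯 ⊤ = 𝒯 :=
  Set.ext fun T => and_iff_left T.top_mem

def ultrafilterLimit (𝒰 : Ultrafilter (CTheory L)) : CTheory L := by
  refine ⟨{φ | {T : CTheory L | φ ∈ T.1} ∈ 𝒰}, ?_, fun φ => ?_⟩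
  · refine (Theory.isSatisfiable_iff_isFinitelySatisfiable).2 fun T₀ hT₀ => ?_
    have hmem : (⋂ φ ∈ T₀, {T : CTheory L | φ ∈ T.1}) ∈ 𝒰 :=
      (Filter.biInter_finset_mem T₀).2 fun φ hφ => hT₀ hφ
    obtain ⟨S, hS⟩ := 𝒰.nonempty_of_mem hmem
    exact S.2.1.mono fun φ hφ => Set.mem_iInter₂.1 hS φ hφ
  · have hcompl : {T : CTheory L | φ.not ∈ T.1} = {T | φ ∈ T.1}ᶜ :=
      Set.ext fun T => T.not_mem_iff
    simpa only [Set.mem_ofPred_eq, hcompl] using 𝒰.mem_or_compl_mem {T : CTheory L | φ ∈ T.1}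

theorem isAccPoint_ultrafilterLimit {𝒰 : Ultrafilter (CTheory L)}
    (hcof : (𝒰 : Filter (CTheory L)) ≤ Filter.cofinite) (h𝒮 : 𝒮 ∈ 𝒰) :
    IsAccPoint 𝒮 (ultrafilterLimit 𝒰) := fun _ hφ hfin =>
  𝒰.compl_mem_iff_notMem.1 (hcof hfin.compl_mem_cofinite) (Filter.inter_mem h𝒮 hφ)

theorem exists_isAccPoint_mem (h : (nbhd 𝒯 φ).Infinite) :
    ∃ T : CTheory L, IsAccPoint 𝒯 T ∧ φ ∈ T.1 := by
  have := h.cofinite_inf_principal_neBot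
  set 𝒰 := Ultrafilter.of (Filter.cofinite ⊓ Filter.principal (nbhd 𝒯 φ))
  have h𝒰 : (𝒰 : Filter (CTheory L)) ≤ _ := Ultrafilter.of_le _
  have hnbhd : nbhd 𝒯 φ ∈ 𝒰 := (h𝒰.trans inf_le_right) (Filter.mem_principal_self _)
  exact ⟨ultrafilterLimit 𝒰,
    isAccPoint_ultrafilterLimit (h𝒰.trans inf_le_left) (Filter.mem_of_superset hnbhd nbhd_subset),
    Filter.mem_of_superset hnbhd fun _ hT => hT.2⟩

theorem exists_isAccPoint (h : 𝒯.Infinite) : ∃ T : CTheory L, IsAccPoint 𝒯 T :=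
  (exists_isAccPoint_mem (φ := ⊤) (nbhd_top ▸ h)).imp fun _ => And.left

end AccPoints

section Rank

variable {𝒮 𝒯 : Set (CTheory L)}

theorem RSge_zero : RSge.{u, v, w} 0 𝒯 ↔ 𝒯.Nonempty := by
  rw [RSge, Ordinal.limitRecOn_zero]

open Classical in
theorem RSge_add_one (β : Ordinal.{w}) :
    RSge (β + 1) 𝒯 ↔
      if β = 0 then 𝒯.Infinite
      else ∃ φ : ℕ → L.Sentence, (∀ m n : ℕ, m ≠ n → Inconsistent (φ m) (φ n)) ∧
        ∀ k : ℕ, RSge β (nbhd 𝒯 (φ k)) := by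
  rw [RSge, Ordinal.limitRecOn_add_one]
  rfl

theorem RSge_of_isSuccLimit {β : Ordinal.{w}} (hβ : Order.IsSuccLimit β) :
    RSge β 𝒯 ↔ ∀ γ < β, RSge γ 𝒯 := by
  rw [RSge, Ordinal.limitRecOn_limit _ _ _ _ hβ]
  rfl

theorem RSge_mono (α : Ordinal.{w}) : Monotone (RSge (L := L) α) := by
  induction α using Ordinal.limitRecOn with
  | zero =>
    intro 𝒮 𝒯 h
    rw [RSge_zero, RSge_zero]
    exact Set.Nonempty.mono h
  | add_one β ih =>
    intro 𝒮 𝒯 h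
    simp only [RSge_add_one]
    split_ifs
    · exact fun hs => hs.mono h
    · exact fun ⟨φ, hφ, hk⟩ => ⟨φ, hφ, fun k => ih (nbhd_mono h _) (hk k)⟩
  | limit β hβ ih =>
    intro 𝒮 𝒯 h
    simp only [RSge_of_isSuccLimit hβ]
    exact fun hs γ hγ => ih γ hγ h (hs γ hγ)

theorem RSge_one_iff : RSge.{u, v, w} 1 𝒯 ↔ 𝒯.Infinite := by
  simpa using RSge_add_one (𝒯 := 𝒯) (0 : Ordinal.{w})

theorem RSge_two_iff :
    RSge.{u, v, w} (1 + 1) 𝒯 ↔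
      ∃ φ : ℕ → L.Sentence, Pairwise (Inconsistent on φ) ∧ ∀ k, (nbhd 𝒯 (φ k)).Infinite := by
  simp only [RSge_add_one, one_ne_zero, if_false, RSge_one_iff]
  rfl

end Rank

section Separation

variable {ι : Type*} {𝒮 𝒯 : Set (CTheory L)}

theorem exists_injective_isAccPoint {φ : ι → L.Sentence} (hφ : Pairwise (Inconsistent on φ))
    (h : ∀ i, (nbhd 𝒯 (φ i)).Infinite) :
    ∃ f : ι → {T : CTheory L // IsAccPoint 𝒯 T}, Injective f := by
  choose T hT hφT using fun i => exists_isAccPoint_mem (h i)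
  refine ⟨fun i => ⟨T i, hT i⟩, fun i j hij => ?_⟩
  by_contra hne
  have hTij : T i = T j := congrArg Subtype.val hij
  exact (T j).not_inconsistent_of_mem (hTij ▸ hφT i) (hφT j) (hφ hne)

theorem exists_pairwise_inconsistent_mem [Finite ι] {T : ι → CTheory L} (hT : Injective T) :
    ∃ φ : ι → L.Sentence, Pairwise (Inconsistent on φ) ∧ ∀ i, φ i ∈ (T i).1 := by
  have hsep : ∀ i j, ∃ σ : L.Sentence, i ≠ j → σ ∈ (T i).1 ∧ σ.not ∈ (T j).1 := fun i j => by
    by_cases hij : i = j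
    · exact ⟨⊤, fun h => absurd hij h⟩
    · exact (CTheory.exists_mem_not_mem_of_ne (hT.ne hij)).imp fun _ h _ => h
  choose σ hσ using hsep
  refine ⟨fun i => Formula.iInf fun j : {j // j ≠ i} => σ i j ⊓ (σ j i).not, fun i j hij => ?_,
    fun i => ?_⟩
  · refine inconsistent_of_forall_realize fun M _ hi hj => ?_
    have hσij := ((Sentence.realize_inf M).1 (Formula.realize_iInf.1 hi ⟨j, hij.symm⟩)).1
    exact ((Sentence.realize_inf M).1 (Formula.realize_iInf.1 hj ⟨i, hij⟩)).2 hσij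
  · refine ((T i).iInf_mem_iff _).2 fun ⟨j, hji⟩ => (T i).inf_mem_iff.2 ?_
    exact ⟨(hσ i j hji.symm).1, (hσ j i hji).2⟩

/-- Infinitely many complete theories can be split off one at a time near one of their
accumulation points `T`: each step takes a sentence `ψ ∈ T`, a member `S ≠ T` of the family
containing it, and a `σ ∈ S` with `¬σ ∈ T`, then continues with `ψ ∧ ¬σ ∈ T`. -/
theorem exists_pairwise_inconsistent_of_infinite (h : 𝒮.Infinite) :
    ∃ φ : ℕ → L.Sentence, Pairwise (Inconsistent on φ) ∧ ∀ n, ∃ S ∈ 𝒮, φ n ∈ S.1 := by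
  obtain ⟨T, hT⟩ := exists_isAccPoint h
  have split : ∀ ψ ∈ T.1, ∃ σ : L.Sentence, (∃ S ∈ 𝒮, ψ ⊓ σ ∈ S.1) ∧ ψ ⊓ σ.not ∈ T.1 := by
    intro ψ hψ
    obtain ⟨S, hS, hST⟩ := ((hT ψ hψ).sdiff (Set.finite_singleton T)).nonempty
    obtain ⟨σ, hσS, hσT⟩ := CTheory.exists_mem_not_mem_of_ne (S := T) hST
    exact ⟨σ, ⟨S, hS.1, S.inf_mem_iff.2 ⟨hS.2, hσS⟩⟩, T.inf_mem_iff.2 ⟨hψ, hσT⟩⟩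
  choose σ hσS hσT using split
  let ψ : ℕ → {ψ : L.Sentence // ψ ∈ T.1} := fun n =>
    Nat.rec ⟨⊤, T.top_mem⟩ (fun _ p => ⟨p.1 ⊓ (σ p.1 p.2).not, hσT p.1 p.2⟩) n
  refine ⟨fun n => (ψ n).1 ⊓ σ (ψ n).1 (ψ n).2, (Std.Symm.pairwise_on _).2 fun m n hmn => ?_,
    fun n => hσS _ _⟩
  refine inconsistent_of_forall_realize fun M _ hm hn => ?_
  have hψ : Antitone fun k => M ⊨ (ψ k).1 :=
    antitone_nat_of_succ_le fun k hk => ((Sentence.realize_inf M).1 hk).1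
  exact ((Sentence.realize_inf M).1 (hψ hmn ((Sentence.realize_inf M).1 hn).1)).2
    ((Sentence.realize_inf M).1 hm).2

end Separation

section Spectrum

variable {𝒯 : Set (CTheory L)} {n : ℕ}

theorem RSge_two_iff_infinite_isAccPoint :
    RSge.{u, v, w} (1 + 1) 𝒯 ↔ {T : CTheory L | IsAccPoint 𝒯 T}.Infinite := by
  rw [RSge_two_iff]
  constructor
  · rintro ⟨φ, hφ, hinf⟩
    obtain ⟨f, hf⟩ := exists_injective_isAccPoint hφ hinf
    exact Set.infinite_coe_iff.1 (Infinite.of_injective f hf)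
  · intro h
    obtain ⟨φ, hφ, hmem⟩ := exists_pairwise_inconsistent_of_infinite h
    exact ⟨φ, hφ, fun k => (hmem k).elim fun S ⟨hS, hφS⟩ => hS _ hφS⟩

theorem eSp_lt_aleph0_iff : eSp 𝒯 < ℵ₀ ↔ {T : CTheory L | IsAccPoint 𝒯 T}.Finite :=
  Cardinal.mk_lt_aleph0_iff.trans Set.finite_coe_iff

theorem RSeq_one_iff (hinf : 𝒯.Infinite) :
    RSeq.{u, v, w} 𝒯 1 ↔ {T : CTheory L | IsAccPoint 𝒯 T}.Finite := by
  rw [RSeq, RSge_one_iff, RSge_two_iff_infinite_isAccPoint, Set.not_infinite, and_iff_right hinf]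

theorem RSeq_nbhd_one [Finite {T : CTheory L // IsAccPoint 𝒯 T}] {T : CTheory L}
    {φ : L.Sentence} (hT : IsAccPoint 𝒯 T) (hφ : φ ∈ T.1) : RSeq.{u, v, w} (nbhd 𝒯 φ) 1 :=
  ⟨RSge_one_iff.2 (hT φ hφ),
    fun h => RSge_two_iff_infinite_isAccPoint.1 (RSge_mono _ nbhd_subset h)
      (Set.finite_coe_iff.1 ‹_›)⟩

theorem natCard_isAccPoint_le_of_dsEq [Finite {T : CTheory L // IsAccPoint 𝒯 T}]
    (hn : dsEq.{u, v, w} 𝒯 1 n) : Nat.card {T : CTheory L // IsAccPoint 𝒯 T} ≤ n := by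
  let e := (Finite.equivFin {T : CTheory L // IsAccPoint 𝒯 T}).symm
  obtain ⟨φ, hφ, hmem⟩ :=
    exists_pairwise_inconsistent_mem (Subtype.val_injective.comp e.injective)
  exact hn.2 ⟨φ, fun _ _ hij => hφ hij, fun i => RSeq_nbhd_one (e i).2 (hmem i)⟩

theorem le_natCard_isAccPoint_of_dsEq [Finite {T : CTheory L // IsAccPoint 𝒯 T}]
    (hn : dsEq.{u, v, w} 𝒯 1 n) : n ≤ Nat.card {T : CTheory L // IsAccPoint 𝒯 T} := by
  obtain ⟨φ, hφ, hRS⟩ := hn.1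
  obtain ⟨f, hf⟩ :=
    exists_injective_isAccPoint (fun _ _ hij => hφ _ _ hij) fun i => RSge_one_iff.1 (hRS i).1
  simpa using Nat.card_le_card_of_injective f hf

end Spectrum

/-- Proposition 2.5: for any infinite family `𝒯`, `e`-Sp(𝒯) is finite if and
only if `RS(𝒯) = 1`; moreover, if `RS(𝒯) = 1` then `e`-Sp(𝒯) = ds(𝒯). -/
theorem eSp_finite_iff_rank_one (𝒯 : Set (CTheory L)) (hinf : 𝒯.Infinite) :
    (eSp 𝒯 < Cardinal.aleph0 ↔ RSeq 𝒯 1) ∧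
    (RSeq 𝒯 1 → ∀ n : ℕ, dsEq 𝒯 1 n → eSp 𝒯 = n) := by
  refine ⟨eSp_lt_aleph0_iff.trans (RSeq_one_iff hinf).symm, fun h1 n hn => ?_⟩
  have : Finite {T : CTheory L // IsAccPoint 𝒯 T} := (RSeq_one_iff hinf).1 h1
  rw [eSp, ← Nat.cast_card,
    (natCard_isAccPoint_le_of_dsEq hn).antisymm (le_natCard_isAccPoint_of_dsEq hn)]
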